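/- arXiv:2403.17663 — 2 statements merged into one kernel-verified Lean document; each statement's English description precedes it below -/
import Mathlib

section
/- For every killing rate κ with 0 < κ < 1 and every integer N ≥ 1 with Nκ ≥ 1/2, the tail of the Green's function series satisfies Σ_{n=N+1}^∞ (4+κ)^{−2n} W_{2n}^{o,o} ≤ 4 e^{−Nκ/4}. -/
open scoped Real

/-- Graph (L¹) distance of `x ∈ ℤ²` from the origin: `|x₁| + |x₂|`. -/
def gnorm (x : ℤ × ℤ) : ℕ := x.1.natAbs + x.2.natAbs

/-- `W n x` is the number of nearest-neighbour walks of length `n` in `ℤ²`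
from the origin `o = (0,0)` to `x`, i.e. the number of sequences
`(v₀, …, v_n)` with `v₀ = o`, `v_n = x` and `|v_{i+1} − v_i| = 1` for all `i`. -/
noncomputable def W (n : ℕ) (x : ℤ × ℤ) : ℕ :=
  Set.ncard {v : Fin (n + 1) → ℤ × ℤ |
    v 0 = (0, 0) ∧ v (Fin.last n) = x ∧
    ∀ i : Fin n, gnorm (v i.succ - v i.castSucc) = 1}

/-- The Green's function `G^{o,x}` of the simple random walk on `ℤ²` with
killing rate `κ`: `G κ x = Σ_{n≥0} (4+κ)^{-n} W_n^{o,x}`. -/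
noncomputable def G (κ : ℝ) (x : ℤ × ℤ) : ℝ :=
  ∑' n : ℕ, (1 / (4 + κ)) ^ n * (W n x : ℝ)

/-! Rotating `ℤ²` by 45° turns the four unit steps into the diagonal steps `(±1, ±1)`, so a closed
walk of length `2m` is a pair of balanced `±1` sequences of length `2m` and
`W_{2m}^{o,o} ≤ binom(2m, m)² ≤ 16^m / (m + 1)`. The tail is then dominated by a geometric series
with ratio `r = (4 / (4 + κ))²`, whose sum `r^{N+1} / ((N + 2)(1 - r))` is at most `4 e^{-Nκ/4}`:
`4 / (4 + κ) ≤ e^{-κ/5}` as `κ ≤ 1`, and `(N + 2)(1 - r) ≥ 1/4` as `Nκ ≥ 1/2`. -/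

theorem sum_succ_sub_castSucc {M : Type*} [AddCommGroup M] {n : ℕ} (v : Fin (n + 1) → M) :
    ∑ i : Fin n, (v i.succ - v i.castSucc) = v (Fin.last n) - v 0 := by
  induction n with
  | zero => simp
  | succ n ih =>
    have h := ih (fun j => v j.castSucc)
    simp only [← Fin.succ_castSucc] at h
    rw [Fin.sum_univ_castSucc, h, Fin.succ_last, Fin.castSucc_zero]
    abel

theorem eq_of_succ_sub_castSucc_eq {M : Type*} [AddGroup M] {n : ℕ} {v w : Fin (n + 1) → M}
    (h0 : v 0 = w 0) (h : ∀ i : Fin n, v i.succ - v i.castSucc = w i.succ - w i.castSucc) :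
    v = w := by
  funext k
  induction k using Fin.induction with
  | zero => exact h0
  | succ i ih => rw [← sub_add_cancel (v i.succ) (v i.castSucc), h i, ih, sub_add_cancel]

section Signs

open Finset

variable {ι : Type*} [Fintype ι]

theorem two_mul_card_filter_eq_one {ε : ι → ℤ} (hε : ∀ i, ε i = 1 ∨ ε i = -1)
    (hsum : ∑ i, ε i = 0) : 2 * #{i | ε i = 1} = Fintype.card ι := by
  have hε' : ∀ i, ε i = 2 * (if ε i = 1 then 1 else 0) - 1 := fun i => by
    rcases hε i with h | h <;> simp [h]
  rw [sum_congr rfl (fun i _ => hε' i), sum_sub_distrib, ← mul_sum, sum_boole] at hsum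
  simp only [sum_const, card_univ, nsmul_eq_mul, mul_one] at hsum
  omega

theorem eq_of_filter_eq_one_eq {ε δ : ι → ℤ} (hε : ∀ i, ε i = 1 ∨ ε i = -1)
    (hδ : ∀ i, δ i = 1 ∨ δ i = -1)
    (h : ({i | ε i = 1} : Finset ι) = ({i | δ i = 1} : Finset ι)) :
    ε = δ := by
  funext i
  have hi := congrArg (i ∈ ·) h
  simp only [mem_filter, mem_univ, true_and, eq_iff_iff] at hi
  rcases hε i with h₁ | h₁ <;> rcases hδ i with h₂ | h₂ <;> simp_all

end Signs

def rotate : ℤ × ℤ →+ ℤ × ℤ where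
  toFun s := (s.1 + s.2, s.1 - s.2)
  map_zero' := rfl
  map_add' a b := by ext <;> simp only [Prod.fst_add, Prod.snd_add] <;> ring

theorem rotate_injective : Function.Injective rotate := by
  intro a b h
  simp only [rotate, AddMonoidHom.coe_mk, ZeroHom.coe_mk, Prod.mk.injEq] at h
  ext <;> omega

theorem gnorm_eq_one_iff (s : ℤ × ℤ) :
    gnorm s = 1 ↔
      ((rotate s).1 = 1 ∨ (rotate s).1 = -1) ∧ ((rotate s).2 = 1 ∨ (rotate s).2 = -1) := by
  simp only [gnorm, rotate, AddMonoidHom.coe_mk, ZeroHom.coe_mk]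
  omega

open Finset in
theorem W_two_mul_origin_le_centralBinom_sq (m : ℕ) :
    W (2 * m) (0, 0) ≤ m.centralBinom ^ 2 := by
  set A := powersetCard m (univ : Finset (Fin (2 * m)))
  have hA : #A = m.centralBinom := by
    rw [card_powersetCard, card_univ, Fintype.card_fin, Nat.centralBinom]
  let steps (v : Fin (2 * m + 1) → ℤ × ℤ) (i : Fin (2 * m)) := rotate (v i.succ - v i.castSucc)
  let code (v : Fin (2 * m + 1) → ℤ × ℤ) : Finset (Fin (2 * m)) × Finset (Fin (2 * m)) :=
    (({i | (steps v i).1 = 1} : Finset _), ({i | (steps v i).2 = 1} : Finset _))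
  have hsigns : ∀ v : Fin (2 * m + 1) → ℤ × ℤ, ∀ i, gnorm (v i.succ - v i.castSucc) = 1 →
      ((steps v i).1 = 1 ∨ (steps v i).1 = -1) ∧ ((steps v i).2 = 1 ∨ (steps v i).2 = -1) :=
    fun v i hi => (gnorm_eq_one_iff _).1 hi
  calc W (2 * m) (0, 0)
        ≤ (↑(A ×ˢ A) : Set (Finset (Fin (2 * m)) × Finset (Fin (2 * m)))).ncard := by
        refine Set.ncard_le_ncard_of_injOn code ?_ ?_ (by exact finite_toSet _)
        · rintro v ⟨hv0, hvl, hv⟩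
          have hsum : ∑ i, steps v i = 0 := by
            rw [← map_sum, sum_succ_sub_castSucc, hv0, hvl, sub_self, map_zero]
          have hcard₁ := two_mul_card_filter_eq_one (fun i => (hsigns v i (hv i)).1)
            (by rw [← Prod.fst_sum, hsum]; rfl)
          have hcard₂ := two_mul_card_filter_eq_one (fun i => (hsigns v i (hv i)).2)
            (by rw [← Prod.snd_sum, hsum]; rfl)
          simp only [Fintype.card_fin] at hcard₁ hcard₂
          simp only [A, code, coe_product, Set.mem_prod, mem_coe, mem_powersetCard,
            subset_univ, true_and]
          omega
        · rintro v ⟨hv0, -, hv⟩ w ⟨hw0, -, hw⟩ hvw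
          simp only [code, Prod.mk.injEq] at hvw
          have hfst := eq_of_filter_eq_one_eq (fun i => (hsigns v i (hv i)).1)
            (fun i => (hsigns w i (hw i)).1) hvw.1
          have hsnd := eq_of_filter_eq_one_eq (fun i => (hsigns v i (hv i)).2)
            (fun i => (hsigns w i (hw i)).2) hvw.2
          refine eq_of_succ_sub_castSucc_eq (hv0.trans hw0.symm) fun i => rotate_injective ?_
          exact Prod.ext (congrFun hfst i) (congrFun hsnd i)
    _ = m.centralBinom ^ 2 := by rw [Set.ncard_coe_finset, card_product, hA, sq]

theorem succ_mul_centralBinom_sq_le (m : ℕ) : (m + 1) * m.centralBinom ^ 2 ≤ 16 ^ m := by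
  induction m with
  | zero => simp
  | succ m ih =>
    refine Nat.le_of_mul_le_mul_left ?_ (show 0 < (m + 1) ^ 2 by positivity)
    have poly : (m + 2) * (2 * (2 * m + 1)) ^ 2 ≤ 16 * (m + 1) ^ 3 := by nlinarith
    calc (m + 1) ^ 2 * ((m + 1 + 1) * (m + 1).centralBinom ^ 2)
        = (m + 2) * ((m + 1) * (m + 1).centralBinom) ^ 2 := by ring
      _ = (m + 2) * (2 * (2 * m + 1)) ^ 2 * m.centralBinom ^ 2 := by
        rw [Nat.succ_mul_centralBinom_succ]; ring
      _ ≤ 16 * (m + 1) ^ 3 * m.centralBinom ^ 2 := Nat.mul_le_mul_right _ poly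
      _ = 16 * (m + 1) ^ 2 * ((m + 1) * m.centralBinom ^ 2) := by ring
      _ ≤ 16 * (m + 1) ^ 2 * 16 ^ m := Nat.mul_le_mul_left _ ih
      _ = (m + 1) ^ 2 * 16 ^ (m + 1) := by ring

theorem W_two_mul_origin_le_sixteen_pow_div (m : ℕ) :
    (W (2 * m) (0, 0) : ℝ) ≤ 16 ^ m / (m + 1) := by
  rw [le_div_iff₀ (by positivity)]
  calc (W (2 * m) (0, 0) : ℝ) * (m + 1) ≤ ((m + 1) * m.centralBinom ^ 2 : ℕ) := by
        rw [mul_comm]; push_cast; gcongr; exact_mod_cast W_two_mul_origin_le_centralBinom_sq m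
    _ ≤ ((16 ^ m : ℕ) : ℝ) := by exact_mod_cast succ_mul_centralBinom_sq_le m
    _ = 16 ^ m := by push_cast; rfl

theorem tsum_shift_le_of_le_pow_div {f : ℕ → ℝ} {r : ℝ} (hr0 : 0 ≤ r) (hr1 : r < 1)
    (hf0 : ∀ m, 0 ≤ f m) (hf : ∀ m, f m ≤ r ^ m / (m + 1)) (N : ℕ) :
    ∑' n, f (N + 1 + n) ≤ r ^ (N + 1) / ((N + 2) * (1 - r)) := by
  have hterm : ∀ n : ℕ, f (N + 1 + n) ≤ r ^ (N + 1) / (N + 2) * r ^ n := fun n => by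
    calc f (N + 1 + n) ≤ r ^ (N + 1 + n) / ((N + 1 + n : ℕ) + 1) := hf _
      _ ≤ r ^ (N + 1 + n) / (N + 2) := by
        refine div_le_div_of_nonneg_left (by positivity) (by positivity) ?_
        push_cast; linarith [(n.cast_nonneg : (0 : ℝ) ≤ n)]
      _ = r ^ (N + 1) / (N + 2) * r ^ n := by rw [pow_add]; ring
  have hgeom := (summable_geometric_of_lt_one hr0 hr1).mul_left (r ^ (N + 1) / (N + 2))
  calc ∑' n, f (N + 1 + n) ≤ ∑' n : ℕ, r ^ (N + 1) / (N + 2) * r ^ n :=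
        (hgeom.of_nonneg_of_le (fun n => hf0 _) hterm).tsum_le_tsum hterm hgeom
    _ = r ^ (N + 1) / ((N + 2) * (1 - r)) := by
      rw [tsum_mul_left, tsum_geometric_of_lt_one hr0 hr1, ← div_eq_mul_inv, div_div]

theorem four_div_four_add_sq_pow_le_exp {κ : ℝ} (hκ0 : 0 ≤ κ) (hκ1 : κ ≤ 1) (N : ℕ) :
    ((4 / (4 + κ)) ^ 2) ^ (N + 1) ≤ Real.exp (-(N * κ) / 4) := by
  have hq : 4 / (4 + κ) ≤ Real.exp (-(κ / 5)) := calc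
    4 / (4 + κ) = -(κ / (4 + κ)) + 1 := by field_simp; ring
    _ ≤ Real.exp (-(κ / (4 + κ))) := Real.add_one_le_exp _
    _ ≤ Real.exp (-(κ / 5)) := by gcongr; linarith
  calc ((4 / (4 + κ)) ^ 2) ^ (N + 1) ≤ Real.exp (-(κ / 5)) ^ (2 * (N + 1)) := by
        rw [← pow_mul]; gcongr
    _ = Real.exp ((2 * (N + 1) : ℕ) * -(κ / 5)) := by rw [Real.exp_nat_mul]
    _ ≤ Real.exp (-(N * κ) / 4) := by
      gcongr; push_cast; nlinarith [(N.cast_nonneg : (0 : ℝ) ≤ N)]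

theorem one_div_mul_one_sub_four_div_four_add_sq_le {κ : ℝ} (hκ : 0 < κ) {N : ℕ}
    (hNκ : (1 : ℝ) / 2 ≤ N * κ) : 1 / ((N + 2) * (1 - (4 / (4 + κ)) ^ 2)) ≤ 4 := by
  have h1r : 1 - (4 / (4 + κ)) ^ 2 = κ * (κ + 8) / (4 + κ) ^ 2 := by field_simp; ring
  rw [h1r, div_le_iff₀ (by positivity)]
  field_simp
  nlinarith [(N.cast_nonneg : (0 : ℝ) ≤ N)]

theorem stmt7_general (κ : ℝ) (hκ : 0 < κ) (hκ' : κ < 1) (N : ℕ)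
    (hNκ : (1 : ℝ) / 2 ≤ N * κ) :
    (∑' n : ℕ, (1 / (4 + κ)) ^ (2 * (N + 1 + n)) * (W (2 * (N + 1 + n)) (0, 0) : ℝ))
      ≤ 4 * Real.exp (-(N * κ) / 4) := by
  set r : ℝ := (4 / (4 + κ)) ^ 2
  have hr0 : 0 ≤ r := by positivity
  have hr1 : r < 1 := by
    have : 4 / (4 + κ) < 1 := (div_lt_one (by linarith)).2 (by linarith)
    exact pow_lt_one₀ (by positivity) this two_ne_zero
  have hterm (m : ℕ) : (1 / (4 + κ)) ^ (2 * m) * (W (2 * m) (0, 0) : ℝ) ≤ r ^ m / (m + 1) := calc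
    _ ≤ (1 / (4 + κ)) ^ (2 * m) * (16 ^ m / (m + 1)) := by
      gcongr; exact W_two_mul_origin_le_sixteen_pow_div m
    _ = r ^ m / (m + 1) := by rw [pow_mul, ← mul_div_assoc, ← mul_pow]; congr 2; ring
  calc _ ≤ r ^ (N + 1) / ((N + 2) * (1 - r)) :=
        tsum_shift_le_of_le_pow_div hr0 hr1 (fun m => by positivity) hterm N
    _ = 1 / ((N + 2) * (1 - r)) * r ^ (N + 1) := by ring
    _ ≤ 4 * Real.exp (-(N * κ) / 4) :=
      mul_le_mul (one_div_mul_one_sub_four_div_four_add_sq_le hκ hNκ)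
        (four_div_four_add_sq_pow_le_exp hκ.le hκ'.le N) (by positivity) (by norm_num)

/-- Lemma 3.4, eq. (3.11): tail bound for the Green's function series when `Nκ ≥ 1/2`. -/
theorem stmt7 (κ : ℝ) (hκ : 0 < κ) (hκ' : κ < 1) (N : ℕ) (hN : 1 ≤ N)
    (hNκ : (1 : ℝ) / 2 ≤ N * κ) :
    (∑' n : ℕ, (1 / (4 + κ)) ^ (2 * (N + 1 + n)) * (W (2 * (N + 1 + n)) (0, 0) : ℝ))
      ≤ 4 * Real.exp (-(N * κ) / 4) :=
  stmt7_general κ hκ hκ' N hNκ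
end

section
/- There exists m₀ such that for every real number m ≥ m₀, every killing rate κ > 0 with e⁹ ≤ κ^{−1} ≤ m, and every x ∈ ℤ² with |x| ≥ m^{1/log G^{o,o}} · κ^{−1/2}, the Green's function satisfies G^{o,x} ≤ m^{−1/(2 log G^{o,o})}. (Under these hypotheses G^{o,o} > 1, so log G^{o,o} > 0.) -/
open scoped Real

/-!
Writing walks as sequences of unit steps, an exponential (Chernoff) tilt by `l = √κ / 3` in
the direction of `x` gives `G^{o,x} ≤ 9 κ⁻¹ exp(-√κ |x| / 3)`. Rotating `ℤ²` by 45° splits a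
closed walk into two independent closed `±1`-walks, so `(n + 1) W_n^{o,o} ≤ 2 · 4ⁿ`, and summing
against `(4 + κ)⁻ⁿ` gives `G^{o,o} ≤ 5 log κ⁻¹ ≤ 5 log m`, while the walks of length 0 and 2 give
`G^{o,o} ≥ 29/25`. Hence `m^{1 / log G^{o,o}} ≥ exp (log m / log (5 log m))`, which eventually
beats `45 log m`; so for `|x| ≥ m^{1 / log G^{o,o}} κ^{-1/2}` the exponential decay swamps the
prefactor `κ⁻¹ ≤ m`.
-/

open Real Finset Filter Topology

theorem Fin.partialSum_last {M : Type*} [AddCommMonoid M] {n : ℕ} (s : Fin n → M) :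
    Fin.partialSum s (Fin.last n) = ∑ i, s i := by
  simp [Fin.partialSum, List.take_of_length_le, List.sum_ofFn]

theorem Fin.partialSum_injective {M : Type*} [AddCommGroup M] {n : ℕ} :
    Function.Injective (Fin.partialSum : (Fin n → M) → Fin (n + 1) → M) := fun s t h =>
  funext fun i => by rw [← Fin.partialSum_right_neg s, ← Fin.partialSum_right_neg t, h]

namespace KilledWalk

def unitSteps : Finset (ℤ × ℤ) := {(1, 0), (-1, 0), (0, 1), (0, -1)}

lemma gnorm_eq_one_iff {y : ℤ × ℤ} : gnorm y = 1 ↔ y ∈ unitSteps := by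
  obtain ⟨a, b⟩ := y
  simp only [gnorm, unitSteps, mem_insert, mem_singleton, Prod.mk.injEq]
  omega

def stepSeqs (n : ℕ) (x : ℤ × ℤ) : Finset (Fin n → ℤ × ℤ) :=
  {s ∈ Fintype.piFinset fun _ => unitSteps | ∑ i, s i = x}

lemma W_eq_card_stepSeqs (n : ℕ) (x : ℤ × ℤ) : W n x = #(stepSeqs n x) := by
  have walks_eq : {v : Fin (n + 1) → ℤ × ℤ | v 0 = (0, 0) ∧ v (Fin.last n) = x ∧
      ∀ i : Fin n, gnorm (v i.succ - v i.castSucc) = 1} =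
      Fin.partialSum '' (stepSeqs n x : Set (Fin n → ℤ × ℤ)) := by
    ext v
    simp only [stepSeqs, coe_filter, Fintype.mem_piFinset, Set.mem_ofPred_eq, Set.mem_image,
      gnorm_eq_one_iff]
    constructor
    · rintro ⟨h0, hx, hsteps⟩
      have hv := Fin.partialSum_left_neg v
      rw [h0, Prod.mk_zero_zero, zero_vadd] at hv
      refine ⟨fun i => -v i.castSucc + v i.succ, ⟨fun i => ?_, ?_⟩, hv⟩
      · simpa only [neg_add_eq_sub] using hsteps i
      · rw [← Fin.partialSum_last, hv, hx]
    · rintro ⟨s, ⟨hsteps, hsum⟩, rfl⟩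
      refine ⟨Fin.partialSum_zero s, (Fin.partialSum_last s).trans hsum, fun i => ?_⟩
      rw [Fin.partialSum_succ, add_sub_cancel_left]
      exact hsteps i
  rw [W, walks_eq, Set.ncard_image_of_injective _ Fin.partialSum_injective, Set.ncard_coe_finset]

lemma card_mul_exp_le_pow {M : Type*} [AddCommMonoid M] [DecidableEq M] (S : Finset M)
    (φ : M →+ ℝ) (n : ℕ) (x : M) :
    #{s ∈ Fintype.piFinset fun _ : Fin n => S | ∑ i, s i = x} * exp (φ x) ≤
      (∑ y ∈ S, exp (φ y)) ^ n := by
  calc (#{s ∈ Fintype.piFinset fun _ : Fin n => S | ∑ i, s i = x} : ℝ) * exp (φ x)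
      = ∑ s ∈ Fintype.piFinset (fun _ : Fin n => S) with ∑ i, s i = x, exp (φ (∑ i, s i)) := by
        rw [sum_congr rfl fun s hs => by rw [(mem_filter.1 hs).2], sum_const, nsmul_eq_mul]
    _ ≤ ∑ s ∈ Fintype.piFinset fun _ : Fin n => S, exp (φ (∑ i, s i)) :=
        sum_le_sum_of_subset_of_nonneg (filter_subset _ _) fun _ _ _ => (exp_pos _).le
    _ = (∑ y ∈ S, exp (φ y)) ^ n := by
        simp only [map_sum, exp_sum, sum_pow']

lemma cosh_mul_sign_le (l : ℝ) (a : ℤ) : cosh (l * a.sign) ≤ cosh l := by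
  have h : |(a.sign : ℝ)| ≤ 1 := by rcases Int.sign_trichotomy a with h | h | h <;> simp [h]
  rw [cosh_le_cosh, abs_mul]
  exact mul_le_of_le_one_right (abs_nonneg l) h

lemma W_mul_exp_le (n : ℕ) (x : ℤ × ℤ) (l : ℝ) :
    (W n x : ℝ) * exp (l * gnorm x) ≤ (4 * cosh l) ^ n := by
  let φ : ℤ × ℤ →+ ℝ := AddMonoidHom.mk'
    (fun y => l * x.1.sign * y.1 + l * x.2.sign * y.2) fun y z => by
      simp only [Prod.fst_add, Prod.snd_add, Int.cast_add]; ring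
  have hφx : φ x = l * gnorm x := by
    simp only [φ, AddMonoidHom.mk'_apply, gnorm, Nat.cast_add, Nat.cast_natAbs, mul_assoc,
      ← Int.cast_mul, Int.sign_mul_self_eq_abs, mul_add]
  have hsteps : ∑ y ∈ unitSteps, exp (φ y) =
      2 * cosh (l * x.1.sign) + 2 * cosh (l * x.2.sign) := by
    simp [unitSteps, φ, cosh_eq]
    ring
  calc (W n x : ℝ) * exp (l * gnorm x) ≤ (∑ y ∈ unitSteps, exp (φ y)) ^ n := by
        rw [W_eq_card_stepSeqs, ← hφx]; exact card_mul_exp_le_pow unitSteps φ n x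
    _ ≤ (4 * cosh l) ^ n := by
        rw [hsteps]
        gcongr
        linarith [cosh_mul_sign_le l x.1, cosh_mul_sign_le l x.2]

def zeroSumSigns (n : ℕ) : Finset (Fin n → ℤ) :=
  {ε ∈ Fintype.piFinset fun _ => {1, -1} | ∑ i, ε i = 0}

lemma two_mul_card_eq_of_mem_zeroSumSigns {n : ℕ} {ε : Fin n → ℤ} (hε : ε ∈ zeroSumSigns n) :
    2 * #{i | ε i = 1} = n := by
  simp only [zeroSumSigns, mem_filter, Fintype.mem_piFinset, mem_insert, mem_singleton] at hε
  obtain ⟨hsign, hsum⟩ := hε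
  have hε : ∀ i, ε i = 2 * (if ε i = 1 then 1 else 0) - 1 := fun i => by
    rcases hsign i with h | h <;> simp [h]
  rw [sum_congr rfl fun i _ => hε i, sum_sub_distrib, ← mul_sum, sum_boole] at hsum
  simp only [sum_const, card_univ, Fintype.card_fin, nsmul_eq_mul, mul_one] at hsum
  omega

lemma card_zeroSumSigns_le_choose (n : ℕ) : #(zeroSumSigns n) ≤ n.choose (n / 2) := by
  have hmaps : ∀ ε ∈ zeroSumSigns n,
      ({i | ε i = 1} : Finset (Fin n)) ∈ powersetCard (n / 2) univ :=
    fun ε hε => mem_powersetCard.2 ⟨subset_univ _, by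
      have := two_mul_card_eq_of_mem_zeroSumSigns hε; omega⟩
  have hinj :
      Set.InjOn (fun ε : Fin n → ℤ => ({i | ε i = 1} : Finset (Fin n))) (zeroSumSigns n) := by
    intro ε hε δ hδ h
    simp only [zeroSumSigns, coe_filter, Fintype.mem_piFinset, mem_insert, mem_singleton,
      Set.mem_ofPred_eq] at hε hδ
    funext i
    have hi : ε i = 1 ↔ δ i = 1 := by simpa using congrArg (i ∈ ·) h
    rcases hε.1 i with h1 | h1 <;> rcases hδ.1 i with h2 | h2 <;> simp_all
  simpa using card_le_card_of_injOn _ hmaps hinj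

lemma card_zeroSumSigns_of_odd {n : ℕ} (hn : Odd n) : #(zeroSumSigns n) = 0 :=
  card_eq_zero.2 <| eq_empty_of_forall_notMem fun ε hε => by
    have := two_mul_card_eq_of_mem_zeroSumSigns hε
    rcases hn with ⟨k, hk⟩
    omega

lemma card_stepSeqs_zero_le (n : ℕ) : #(stepSeqs n (0, 0)) ≤ #(zeroSumSigns n) ^ 2 := by
  let rotate : (Fin n → ℤ × ℤ) → (Fin n → ℤ) × (Fin n → ℤ) :=
    fun s => (fun i => (s i).1 + (s i).2, fun i => (s i).1 - (s i).2)
  have hmaps : ∀ s ∈ stepSeqs n (0, 0), rotate s ∈ zeroSumSigns n ×ˢ zeroSumSigns n := by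
    intro s hs
    simp only [stepSeqs, mem_filter, Fintype.mem_piFinset, Prod.ext_iff, Prod.fst_sum,
      Prod.snd_sum] at hs
    obtain ⟨hsteps, hsum₁, hsum₂⟩ := hs
    simp only [rotate, zeroSumSigns, mem_product, mem_filter, Fintype.mem_piFinset, mem_insert,
      mem_singleton, sum_add_distrib, sum_sub_distrib, hsum₁, hsum₂]
    refine ⟨⟨fun i => ?_, rfl⟩, fun i => ?_, rfl⟩ <;>
      rcases (by simpa [unitSteps] using hsteps i : _ ∨ _ ∨ _ ∨ _) with h | h | h | h <;>
      simp [h]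
  have hinj : Set.InjOn rotate (stepSeqs n (0, 0)) := by
    intro s _ t _ h
    simp only [rotate, Prod.mk.injEq, funext_iff] at h
    funext i
    have := h.1 i
    have := h.2 i
    ext <;> omega
  simpa [sq] using card_le_card_of_injOn rotate hmaps hinj

lemma succ_mul_centralBinom_sq_le (k : ℕ) : (k + 1) * k.centralBinom ^ 2 ≤ 16 ^ k := by
  induction k with
  | zero => simp
  | succ k ih =>
    have key : (k + 1) ^ 2 * ((k + 2) * (k + 1).centralBinom ^ 2) ≤
        (k + 1) ^ 2 * 16 ^ (k + 1) :=
      calc (k + 1) ^ 2 * ((k + 2) * (k + 1).centralBinom ^ 2)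
          = (k + 2) * ((k + 1) * (k + 1).centralBinom) ^ 2 := by ring
        _ = (k + 2) * (2 * (2 * k + 1)) ^ 2 * k.centralBinom ^ 2 := by
            rw [Nat.succ_mul_centralBinom_succ]; ring
        _ ≤ 16 * (k + 1) ^ 2 * ((k + 1) * k.centralBinom ^ 2) := by
            rw [← mul_assoc]; exact Nat.mul_le_mul_right _ (by nlinarith)
        _ ≤ 16 * (k + 1) ^ 2 * 16 ^ k := Nat.mul_le_mul_left _ ih
        _ = (k + 1) ^ 2 * 16 ^ (k + 1) := by ring
    exact Nat.le_of_mul_le_mul_left key (by positivity)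

lemma succ_mul_W_zero_le (n : ℕ) : (n + 1) * W n (0, 0) ≤ 2 * 4 ^ n := by
  rw [W_eq_card_stepSeqs]
  have hW := card_stepSeqs_zero_le n
  rcases Nat.even_or_odd' n with ⟨k, rfl | rfl⟩
  · have hchoose := card_zeroSumSigns_le_choose (2 * k)
    rw [Nat.mul_div_cancel_left k two_pos, ← Nat.centralBinom_eq_two_mul_choose] at hchoose
    calc (2 * k + 1) * #(stepSeqs (2 * k) (0, 0)) ≤ 2 * ((k + 1) * k.centralBinom ^ 2) := by
          have := Nat.pow_le_pow_left hchoose 2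
          nlinarith
      _ ≤ 2 * 4 ^ (2 * k) := by
          rw [pow_mul]
          exact Nat.mul_le_mul_left _ (succ_mul_centralBinom_sq_le k)
  · rw [card_zeroSumSigns_of_odd ⟨k, rfl⟩] at hW
    simp_all

lemma W_two_zero : W 2 (0, 0) = 4 := by
  rw [W_eq_card_stepSeqs]; decide

lemma W_zero_zero : W 0 (0, 0) = 1 := by
  rw [W_eq_card_stepSeqs]; decide

section Green

variable {κ : ℝ}

lemma G_term_le (hκ : 0 < κ) (n : ℕ) (x : ℤ × ℤ) (l : ℝ) :
    (1 / (4 + κ)) ^ n * (W n x : ℝ) ≤ exp (-(l * gnorm x)) * (4 * cosh l / (4 + κ)) ^ n := by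
  have hWx : (W n x : ℝ) ≤ exp (-(l * gnorm x)) * (4 * cosh l) ^ n := by
    rw [← div_le_iff₀' (exp_pos _), exp_neg, div_inv_eq_mul]
    exact W_mul_exp_le n x l
  calc (1 / (4 + κ)) ^ n * (W n x : ℝ)
      ≤ (1 / (4 + κ)) ^ n * (exp (-(l * gnorm x)) * (4 * cosh l) ^ n) := by gcongr
    _ = exp (-(l * gnorm x)) * (4 * cosh l / (4 + κ)) ^ n := by
        rw [div_eq_mul_one_div (4 * cosh l), mul_pow]; ring

lemma G_term_nonneg (hκ : 0 < κ) (n : ℕ) (x : ℤ × ℤ) : 0 ≤ (1 / (4 + κ)) ^ n * (W n x : ℝ) := by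
  have : 0 < 4 + κ := by linarith
  positivity

lemma summable_G_term (hκ : 0 < κ) (x : ℤ × ℤ) :
    Summable fun n => (1 / (4 + κ)) ^ n * (W n x : ℝ) := by
  have hratio : 4 / (4 + κ) < 1 := by rw [div_lt_one (by linarith)]; linarith
  refine .of_nonneg_of_le (G_term_nonneg hκ · x) (fun n => ?_)
    ((summable_geometric_of_lt_one (by positivity) hratio).mul_left 1)
  simpa using G_term_le hκ n x 0

lemma G_le_of_four_cosh_lt (hκ : 0 < κ) {l : ℝ} (hl : 4 * cosh l < 4 + κ) (x : ℤ × ℤ) :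
    G κ x ≤ (4 + κ) / (4 + κ - 4 * cosh l) * exp (-(l * gnorm x)) := by
  have hρ0 : 0 ≤ 4 * cosh l / (4 + κ) := by positivity
  have hρ1 : 4 * cosh l / (4 + κ) < 1 := (div_lt_one (by linarith)).2 hl
  calc G κ x ≤ ∑' n : ℕ, exp (-(l * gnorm x)) * (4 * cosh l / (4 + κ)) ^ n :=
        (summable_G_term hκ x).tsum_le_tsum (G_term_le hκ · x l)
          ((summable_geometric_of_lt_one hρ0 hρ1).mul_left _)
    _ = (4 + κ) / (4 + κ - 4 * cosh l) * exp (-(l * gnorm x)) := by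
        rw [tsum_mul_left, tsum_geometric_of_lt_one hρ0 hρ1, mul_comm]
        congr 1
        field_simp

lemma G_zero_ge (hκ : 0 < κ) : 1 + 4 / (4 + κ) ^ 2 ≤ G κ (0, 0) := by
  have h := (summable_G_term hκ (0, 0)).sum_le_tsum {0, 2} fun n _ => G_term_nonneg hκ n (0, 0)
  rw [sum_pair (by norm_num), W_zero_zero, W_two_zero] at h
  push_cast at h
  exact le_of_eq_of_le (by field_simp) h

lemma inv_eight_le_log_G_zero (hκ : 0 < κ) (hκ1 : κ ≤ 1) : 1 / 8 ≤ log (G κ (0, 0)) := by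
  have hG : 29 / 25 ≤ G κ (0, 0) := by
    refine le_trans ?_ (G_zero_ge hκ)
    have : 4 / 25 ≤ 4 / (4 + κ) ^ 2 := by gcongr; nlinarith
    linarith
  calc (1 / 8 : ℝ) ≤ 1 - (29 / 25)⁻¹ := by norm_num
    _ ≤ log (29 / 25) := one_sub_inv_le_log_of_pos (by norm_num)
    _ ≤ log (G κ (0, 0)) := log_le_log (by norm_num) hG

lemma G_zero_le (hκ : 0 < κ) : G κ (0, 0) ≤ (4 + κ) / 2 * log ((4 + κ) / κ) := by
  have h4 : 0 < 4 + κ := by linarith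
  have ht : |4 / (4 + κ)| < 1 := by rw [abs_of_pos (by positivity), div_lt_one h4]; linarith
  have hlog := (hasSum_pow_div_log_of_abs_lt_one ht).mul_left ((4 + κ) / 2)
  have h1t : -log (1 - 4 / (4 + κ)) = log ((4 + κ) / κ) := by
    rw [one_sub_div h4.ne', add_sub_cancel_left, log_div hκ.ne' h4.ne', log_div h4.ne' hκ.ne']
    ring
  refine ((summable_G_term hκ (0, 0)).tsum_le_tsum (fun n => ?_) hlog.summable).trans_eq
    (by rw [hlog.tsum_eq, h1t])
  have hW : ((n : ℝ) + 1) * W n (0, 0) ≤ 2 * 4 ^ n := by exact_mod_cast succ_mul_W_zero_le n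
  calc (1 / (4 + κ)) ^ n * (W n (0, 0) : ℝ) ≤ (1 / (4 + κ)) ^ n * (2 * 4 ^ n / (n + 1)) := by
        gcongr
        rw [le_div_iff₀ (by positivity)]
        linarith
    _ = (4 + κ) / 2 * ((4 / (4 + κ)) ^ (n + 1) / (n + 1)) := by
        have : (n : ℝ) + 1 ≠ 0 := by positivity
        have : 4 + κ ≠ 0 := h4.ne'
        rw [div_pow, div_pow, one_pow]
        field_simp
        ring

lemma G_zero_le_five_mul_log (hκ : 0 < κ) (h5 : 5 ≤ κ⁻¹) : G κ (0, 0) ≤ 5 * log κ⁻¹ := by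
  have hκ5 : κ ≤ 5⁻¹ := (le_inv_comm₀ hκ (by norm_num)).2 h5
  have hlog : log 5 ≤ log κ⁻¹ := log_le_log (by norm_num) h5
  calc G κ (0, 0) ≤ (4 + κ) / 2 * log ((4 + κ) / κ) := G_zero_le hκ
    _ ≤ 5 / 2 * log (5 / κ) := by
        have : 0 ≤ log ((4 + κ) / κ) := log_nonneg (by rw [le_div_iff₀ hκ]; linarith)
        gcongr
        all_goals linarith
    _ = 5 / 2 * (log 5 + log κ⁻¹) := by
        rw [div_eq_mul_inv 5 κ, log_mul (by norm_num) (by positivity)]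
    _ ≤ 5 * log κ⁻¹ := by linarith

lemma cosh_le_one_add_sq {x : ℝ} (hx : |x| ≤ 1) : cosh x ≤ 1 + x ^ 2 := by
  have h₁ := abs_le.1 (abs_exp_sub_one_sub_id_le hx)
  have h₂ := abs_le.1 (abs_exp_sub_one_sub_id_le (x := -x) (by rwa [abs_neg]))
  rw [cosh_eq]
  nlinarith

lemma G_le_exp_neg_sqrt_mul (hκ : 0 < κ) (hκ1 : κ ≤ 1) (x : ℤ × ℤ) :
    G κ x ≤ 9 / κ * exp (-(√κ / 3 * gnorm x)) := by
  have hl : |√κ / 3| ≤ 1 := by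
    rw [abs_of_nonneg (by positivity)]
    linarith [sqrt_le_one.2 hκ1]
  have hsq : (√κ / 3) ^ 2 = κ / 9 := by rw [div_pow, sq_sqrt hκ.le]; norm_num
  have hcosh : 4 * cosh (√κ / 3) ≤ 4 + 4 * κ / 9 := by linarith [cosh_le_one_add_sq hl]
  refine (G_le_of_four_cosh_lt hκ (by linarith) x).trans ?_
  gcongr ?_ * _
  rw [div_le_div_iff₀ (by linarith) hκ]
  nlinarith

end Green

lemma eventually_log_mul_log_le {a b : ℝ} (ha : 0 < a) (hb : 0 < b) :
    ∀ᶠ u in atTop, log (a * u) * log (b * u) ≤ u := by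
  set c := max a b
  have hc : 0 < c := lt_max_of_lt_left ha
  have hlim : Tendsto (fun u => log (c * u) ^ 2 / (1 * (c * u) + 0)) atTop (𝓝 0) :=
    (tendsto_pow_log_div_mul_add_atTop 1 0 2 one_ne_zero).comp (tendsto_id.const_mul_atTop hc)
  filter_upwards [hlim.eventually (gt_mem_nhds (inv_pos.2 hc)), eventually_ge_atTop a⁻¹,
    eventually_ge_atTop b⁻¹, eventually_gt_atTop 0] with u hsmall hau hbu hu
  rw [inv_le_iff_one_le_mul₀' ha] at hau
  rw [inv_le_iff_one_le_mul₀' hb] at hbu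
  rw [one_mul, add_zero, div_lt_iff₀ (by positivity), inv_mul_cancel_left₀ hc.ne'] at hsmall
  have hac : a * u ≤ c * u := mul_le_mul_of_nonneg_right (le_max_left a b) hu.le
  have hbc : b * u ≤ c * u := mul_le_mul_of_nonneg_right (le_max_right a b) hu.le
  calc log (a * u) * log (b * u) ≤ log (c * u) * log (c * u) :=
        mul_le_mul (log_le_log (by linarith) hac) (log_le_log (by linarith) hbc)
          (log_nonneg hbu) (log_nonneg (hau.trans hac))
    _ ≤ u := by rw [← sq]; exact hsmall.le

lemma eventually_mul_log_le_rpow_inv :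
    ∀ᶠ m in atTop, ∀ L, 0 < L → L ≤ log (5 * log m) → 45 * log m ≤ m ^ (1 / L) := by
  filter_upwards [tendsto_log_atTop.eventually (eventually_log_mul_log_le (a := 5) (b := 45)
    (by norm_num) (by norm_num)), tendsto_log_atTop.eventually (eventually_ge_atTop 1),
    eventually_gt_atTop 0] with m hlog hm1 hm0 L hL hLm
  have hexp : log (45 * log m) ≤ log m / L := by
    rw [le_div_iff₀ hL]
    calc log (45 * log m) * L ≤ log (45 * log m) * log (5 * log m) :=
          mul_le_mul_of_nonneg_left hLm (log_nonneg (by linarith))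
      _ ≤ log m := by linarith
  calc 45 * log m = exp (log (45 * log m)) := (exp_log (by positivity)).symm
    _ ≤ exp (log m / L) := exp_le_exp.2 hexp
    _ = m ^ (1 / L) := by rw [rpow_def_of_pos hm0]; ring_nf

lemma le_rpow_of_exp_decay {m κ L d g : ℝ} (hκ : 0 < κ) (hκm : κ⁻¹ ≤ m) (hm : 9 ≤ log m)
    (hL : 1 / 8 ≤ L) (hg : g ≤ 9 / κ * exp (-(√κ / 3 * d)))
    (hd : m ^ (1 / L) * κ⁻¹ ^ (1 / 2 : ℝ) ≤ d) (hgrowth : 45 * log m ≤ m ^ (1 / L)) :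
    g ≤ m ^ (-(1 / (2 * L))) := by
  have hm0 : 0 < m := (inv_pos.2 hκ).trans_le hκm
  have hsqrt : κ⁻¹ ^ (1 / 2 : ℝ) * √κ = 1 := by
    rw [← sqrt_eq_rpow, sqrt_inv, inv_mul_cancel₀ (sqrt_pos.2 hκ).ne']
  have hdist : 45 * log m ≤ √κ * d := by
    calc 45 * log m ≤ m ^ (1 / L) * (κ⁻¹ ^ (1 / 2 : ℝ) * √κ) := by rwa [hsqrt, mul_one]
      _ ≤ √κ * d := by rw [← mul_assoc, mul_comm √κ]; gcongr
  have hpre : 9 / κ ≤ exp (log 9 + log m) := by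
    rw [exp_add, exp_log (by norm_num), exp_log hm0, div_eq_mul_inv]; gcongr
  have hlog9 : log 9 ≤ 9 := (log_le_sub_one_of_pos (by norm_num)).trans (by norm_num)
  have hexpo : log 9 + log m - √κ / 3 * d ≤ log m * -(1 / (2 * L)) := by
    have : 1 / (2 * L) ≤ 4 := by rw [div_le_iff₀ (by linarith)]; linarith
    nlinarith
  calc g ≤ exp (log 9 + log m) * exp (-(√κ / 3 * d)) := hg.trans (by gcongr)
    _ ≤ m ^ (-(1 / (2 * L))) := by
        rw [← exp_add, rpow_def_of_pos hm0]
        exact exp_le_exp.2 (by linarith)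

end KilledWalk

open KilledWalk in
/-- Proposition 3.7: for `m` large, `e⁹ ≤ κ⁻¹ ≤ m` and
`|x| ≥ m^{1/log G^{o,o}} κ^{-1/2}`, one has `G^{o,x} ≤ m^{-1/(2 log G^{o,o})}`. -/
theorem stmt12 :
    ∃ m₀ : ℝ, ∀ m : ℝ, m₀ ≤ m → ∀ κ : ℝ, 0 < κ →
      Real.exp 9 ≤ κ⁻¹ → κ⁻¹ ≤ m →
      ∀ x : ℤ × ℤ,
        m ^ (1 / Real.log (G κ (0, 0))) * κ⁻¹ ^ ((1 : ℝ) / 2) ≤ (gnorm x : ℝ) →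
        G κ x ≤ m ^ (-(1 / (2 * Real.log (G κ (0, 0))))) := by
  obtain ⟨m₀, hm₀⟩ := eventually_atTop.1 eventually_mul_log_le_rpow_inv
  refine ⟨m₀, fun m hm κ hκ hκ9 hκm x hx => ?_⟩
  have hκ10 : 10 ≤ κ⁻¹ := by linarith [add_one_le_exp 9]
  have hκ1 : κ ≤ 1 := by rw [← inv_le_inv₀ one_pos hκ, inv_one]; linarith
  have hlogm : 9 ≤ log m := (le_log_iff_exp_le (by linarith)).2 (hκ9.trans hκm)
  have hL := inv_eight_le_log_G_zero hκ hκ1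
  have hG0 : 0 < G κ (0, 0) := lt_of_lt_of_le (by positivity) (G_zero_ge hκ)
  have hLm : log (G κ (0, 0)) ≤ log (5 * log m) :=
    log_le_log hG0 ((G_zero_le_five_mul_log hκ (by linarith)).trans
      (by linarith [log_le_log (by linarith) hκm]))
  exact le_rpow_of_exp_decay hκ hκm hlogm hL (G_le_exp_neg_sqrt_mul hκ hκ1 x) hx
    (hm₀ m hm _ (by linarith) hLm)
end
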